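/- Let I ⊆ R be a monomial ideal with linear quotients whose decomposition function b is regular, let m ∈ G(I), α ⊆ set(m) with |α| = p, and let σ be a permutation of α with ch(m,α,σ) nondegenerate, with vertex monomials m_0 = m, m_i = b(x_{σ_i} · m_{i−1}). Then the facet of ch(m,α,σ) obtained by omitting the first vertex m_0, and the facet obtained by omitting the last vertex m_p, are both exterior: neither is a facet of any nondegenerate simplex ch(m,α,σ′) with ch(m,α,σ′) ≠ ch(m,α,σ), where σ′ ranges over permutations of α. -/

import Mathlib

open MvPolynomial

/-- The monomial ideal generated by a set of exponent vectors. -/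
noncomputable def genIdeal (K : Type*) [Field K] {n : ℕ} (ms : Set (Fin n →₀ ℕ)) :
    Ideal (MvPolynomial (Fin n) K) :=
  Ideal.span ((fun u => MvPolynomial.monomial u (1 : K)) '' ms)

/-- The colon ideal `⟨m_1, …, m_{j-1}⟩ : m_j`. -/
noncomputable def colonJ (K : Type*) [Field K] {n k : ℕ} (m : Fin k → (Fin n →₀ ℕ))
    (j : Fin k) : Ideal (MvPolynomial (Fin n) K) :=
  Submodule.colon (genIdeal K {u | ∃ i : Fin k, i < j ∧ u = m i})
    (Ideal.span {MvPolynomial.monomial (m j) (1 : K)})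

/-- `I` has linear quotients w.r.t. the ordering `m_1,…,m_k` of its generators:
each colon ideal is generated by a subset of the variables. -/
def HasLinearQuotients (K : Type*) [Field K] {n k : ℕ}
    (m : Fin k → (Fin n →₀ ℕ)) : Prop :=
  ∀ j : Fin k, ∃ S : Set (Fin n),
    colonJ K m j = Ideal.span ((fun s => (MvPolynomial.X s : MvPolynomial (Fin n) K)) '' S)

/-- `set(m_j) = {i : x_i ∈ ⟨m_1,…,m_{j-1}⟩ : m_j}`. -/
def mset (K : Type*) [Field K] {n k : ℕ} (m : Fin k → (Fin n →₀ ℕ)) (j : Fin k) :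
    Set (Fin n) :=
  {t | (MvPolynomial.X t : MvPolynomial (Fin n) K) ∈ colonJ K m j}

/-- The `m i` are minimal monomial generators: none divides another. -/
def MinimalGens {n k : ℕ} (m : Fin k → (Fin n →₀ ℕ)) : Prop :=
  ∀ i j : Fin k, m i ≤ m j → i = j

/-- `b` is the decomposition function: for a monomial `u ∈ I`, `b u` is the smallest
index `j` with `u ∈ ⟨m_1,…,m_j⟩`. -/
def IsDecompositionFunction (K : Type*) [Field K] {n k : ℕ}
    (m : Fin k → (Fin n →₀ ℕ)) (b : (Fin n →₀ ℕ) → Fin k) : Prop :=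
  ∀ u : Fin n →₀ ℕ, MvPolynomial.monomial u (1 : K) ∈ genIdeal K (Set.range m) →
    (MvPolynomial.monomial u (1 : K) ∈ genIdeal K {v | ∃ i : Fin k, i ≤ b u ∧ v = m i}) ∧
    (∀ j : Fin k,
      MvPolynomial.monomial u (1 : K) ∈ genIdeal K {v | ∃ i : Fin k, i ≤ j ∧ v = m i} →
      b u ≤ j)

/-- The decomposition function is regular: `set(b(x_t·m)) ⊆ set(m)` for every
generator `m` and every `t ∈ set(m)`. -/
def IsRegularDecomp (K : Type*) [Field K] {n k : ℕ}
    (m : Fin k → (Fin n →₀ ℕ)) (b : (Fin n →₀ ℕ) → Fin k) : Prop :=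
  ∀ j : Fin k, ∀ t ∈ mset K m j,
    mset K m (b (m j + Finsupp.single t 1)) ⊆ mset K m j

/-- The sequence of vertex monomials `m_0 = m₀`, `m_{i+1} = b(x_{σ(i)} · m_i)` of the
simplex `ch(m, α, σ)` (here `σ` is 0-indexed: `σ 0, …, σ (p-1)` is the permutation). -/
noncomputable def chainSeq {n k : ℕ} (m : Fin k → (Fin n →₀ ℕ)) (b : (Fin n →₀ ℕ) → Fin k)
    (m0 : Fin n →₀ ℕ) (σ : ℕ → Fin n) : ℕ → (Fin n →₀ ℕ)
  | 0 => m0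
  | i + 1 => m (b (chainSeq m b m0 σ i + Finsupp.single (σ i) 1))

/-- `σ 0, …, σ (p-1)` is a permutation (an ordering) of the finite set `α`. -/
def PermOf {n : ℕ} (σ : ℕ → Fin n) (p : ℕ) (α : Finset (Fin n)) : Prop :=
  Set.InjOn σ (Set.Iio p) ∧ ∀ a : Fin n, a ∈ α ↔ ∃ i < p, σ i = a

/-- `ch(m,α,σ)` is nondegenerate: the vertex monomials `m_0, …, m_p` are pairwise
distinct. -/
def Nondeg {n k : ℕ} (m : Fin k → (Fin n →₀ ℕ)) (b : (Fin n →₀ ℕ) → Fin k)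
    (m0 : Fin n →₀ ℕ) (σ : ℕ → Fin n) (p : ℕ) : Prop :=
  Set.InjOn (chainSeq m b m0 σ) (Set.Iic p)

/-- A monomial (exponent vector) regarded as a point of `ℝⁿ`. -/
def toR {n : ℕ} (u : Fin n →₀ ℕ) : Fin n → ℝ := fun a => (u a : ℝ)

/-- The set of vertex monomials of `ch(m,α,σ)`. -/
def vertSet {n k : ℕ} (m : Fin k → (Fin n →₀ ℕ)) (b : (Fin n →₀ ℕ) → Fin k)
    (m0 : Fin n →₀ ℕ) (σ : ℕ → Fin n) (p : ℕ) : Set (Fin n →₀ ℕ) :=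
  {v | ∃ i ≤ p, v = chainSeq m b m0 σ i}

/-- `F` (a set of vertex monomials) is a facet of the simplex `ch(m,α,τ)`: it is
obtained from the vertex set by removing exactly one vertex. -/
def IsFacetOf {n k : ℕ} (m : Fin k → (Fin n →₀ ℕ)) (b : (Fin n →₀ ℕ) → Fin k)
    (m0 : Fin n →₀ ℕ) (τ : ℕ → Fin n) (p : ℕ) (F : Set (Fin n →₀ ℕ)) : Prop :=
  ∃ i ≤ p, F = vertSet m b m0 τ p \ {chainSeq m b m0 τ i}


/-!
Both the first vertex `m` and the last vertex of `ch(m, α, σ)` are independent of `σ`. For the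
last one, regularity gives `b(x_s v) = b(x_s b(v))` for every monomial `v ∈ I`, so the chain
`m_i = b(x_{σ_i} m_{i-1})` computes `m_p = b(m ∏_{a ∈ α} x_a)`. A set `V \ {x}` with `x` a vertex
of both simplices can only be a facet of `ch(m, α, σ')` by omitting `x`, and then the two vertex
sets coincide.
-/

theorem Finsupp.single_one_le_of_le_add {ι : Type*} {r : ι} {g h : ι →₀ ℕ}
    (hgh : single r 1 ≤ g + h) (hg : ¬ single r 1 ≤ g) : single r 1 ≤ h := by
  simp only [single_le_iff, add_apply] at *
  omega

section MonomialIdeal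

variable {K : Type*} [Field K] {n k : ℕ} {m : Fin k → (Fin n →₀ ℕ)} {b : (Fin n →₀ ℕ) → Fin k}

theorem monomial_mem_genIdeal_iff (ms : Set (Fin n →₀ ℕ)) (u : Fin n →₀ ℕ) :
    monomial u (1 : K) ∈ genIdeal K ms ↔ ∃ v ∈ ms, v ≤ u := by
  rw [genIdeal, mem_ideal_span_monomial_image]
  simp

theorem monomial_mem_colonJ_iff (m : Fin k → (Fin n →₀ ℕ)) (q : Fin k) (w : Fin n →₀ ℕ) :
    monomial w (1 : K) ∈ colonJ K m q ↔ ∃ i < q, m i ≤ m q + w := by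
  rw [colonJ, ← Ideal.submodule_span_eq, Submodule.mem_colon_span_singleton, smul_eq_mul,
    monomial_mul, mul_one, monomial_mem_genIdeal_iff]
  simp [add_comm w]

theorem mem_mset_iff (m : Fin k → (Fin n →₀ ℕ)) (q : Fin k) (t : Fin n) :
    t ∈ mset K m q ↔ ∃ i < q, m i ≤ m q + Finsupp.single t 1 :=
  monomial_mem_colonJ_iff m q _

theorem HasLinearQuotients.exists_mem_mset_single_le (hlq : HasLinearQuotients K m)
    {q c : Fin k} (hc : c < q) {h : Fin n →₀ ℕ} (hle : m c ≤ m q + h) :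
    ∃ r ∈ mset K m q, Finsupp.single r 1 ≤ h := by
  obtain ⟨S, hS⟩ := hlq q
  have hmem : monomial h (1 : K) ∈ colonJ K m q :=
    (monomial_mem_colonJ_iff m q h).2 ⟨c, hc, hle⟩
  rw [hS, mem_ideal_span_X_image] at hmem
  obtain ⟨r, hrS, hr⟩ := hmem h (by simp)
  refine ⟨r, ?_, Finsupp.single_le_iff.2 (Nat.one_le_iff_ne_zero.2 hr)⟩
  change X r ∈ colonJ K m q
  rw [hS]
  exact Ideal.subset_span ⟨r, hrS, rfl⟩

theorem IsDecompositionFunction.le_of_gen_le (hb : IsDecompositionFunction K m b)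
    {v : Fin n →₀ ℕ} {i : Fin k} (hi : m i ≤ v) : b v ≤ i :=
  (hb v ((monomial_mem_genIdeal_iff _ _).2 ⟨m i, ⟨i, rfl⟩, hi⟩)).2 i
    ((monomial_mem_genIdeal_iff _ _).2 ⟨m i, ⟨i, le_rfl, rfl⟩, hi⟩)

theorem IsDecompositionFunction.gen_le_self (hb : IsDecompositionFunction K m b)
    {v : Fin n →₀ ℕ} (hv : ∃ i, m i ≤ v) : m (b v) ≤ v := by
  obtain ⟨i₀, hi₀⟩ := hv
  obtain ⟨_, ⟨i, hib, rfl⟩, hle⟩ := (monomial_mem_genIdeal_iff _ _).1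
    (hb v ((monomial_mem_genIdeal_iff _ _).2 ⟨m i₀, ⟨i₀, rfl⟩, hi₀⟩)).1
  rwa [le_antisymm hib (hb.le_of_gen_le hle)] at hle

theorem IsDecompositionFunction.lt_of_mem_mset (hb : IsDecompositionFunction K m b)
    {q : Fin k} {t : Fin n} (ht : t ∈ mset K m q) {w : Fin n →₀ ℕ}
    (hw : m q + Finsupp.single t 1 ≤ w) : b w < q := by
  obtain ⟨i, hiq, hi⟩ := (mem_mset_iff m q t).1 ht
  exact (hb.le_of_gen_le (hi.trans hw)).trans_lt hiq

theorem IsRegularDecomp.decomp_add_single (hreg : IsRegularDecomp K m b)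
    (hlq : HasLinearQuotients K m) (hb : IsDecompositionFunction K m b)
    {v : Fin n →₀ ℕ} (hv : ∃ i, m i ≤ v) (s : Fin n) :
    b (v + Finsupp.single s 1) = b (m (b v) + Finsupp.single s 1) := by
  set q := b v
  set e : Fin n →₀ ℕ := Finsupp.single s 1
  have hqv : m q ≤ v := hb.gen_le_self hv
  obtain ⟨h, hvh⟩ := exists_add_of_le hqv
  set c := b (v + e)
  set c' := b (m q + e)
  have hc' : m c' ≤ m q + e := hb.gen_le_self ⟨q, le_self_add⟩
  have hc : m c ≤ m q + (h + e) := by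
    rw [← add_assoc, ← hvh]
    exact hb.gen_le_self ⟨q, hqv.trans le_self_add⟩
  refine le_antisymm (hb.le_of_gen_le (hc'.trans (by gcongr))) (not_lt.1 fun hlt => ?_)
  -- By minimality of `q = b v`, no variable of `set(q)` divides `h = v / m_q`. So linear quotients
  -- at `q` force `s ∈ set(q)`, and at `c'` they give a variable of `set(c') ⊆ set(q)` dividing
  -- `m_q x_s / m_{c'}`, against the minimality of `c'`.
  have hfree : ∀ r ∈ mset K m q, ¬ Finsupp.single r 1 ≤ h := fun r hr hrh =>
    (hb.lt_of_mem_mset hr (by rw [hvh]; gcongr)).ne rfl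
  have hcq : c < q := hlt.trans_le (hb.le_of_gen_le le_self_add)
  obtain ⟨r, hrq, hr⟩ := hlq.exists_mem_mset_single_le hcq hc
  have hs : s ∈ mset K m q := by
    have hrs := Finsupp.single_one_le_of_le_add hr (hfree r hrq)
    rw [Finsupp.single_le_iff, Finsupp.single_apply] at hrs
    obtain rfl : s = r := by by_contra hsr; simp [hsr] at hrs
    exact hrq
  obtain ⟨g, hg⟩ := exists_add_of_le hc'
  have hc₂ : m c ≤ m c' + (h + g) := by
    rwa [add_left_comm, hg, add_left_comm] at hc
  obtain ⟨r', hr'c', hr'⟩ := hlq.exists_mem_mset_single_le hlt hc₂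
  have hr'g := Finsupp.single_one_le_of_le_add hr' (hfree r' (hreg q s hs hr'c'))
  exact (hb.lt_of_mem_mset hr'c' (by rw [hg]; gcongr)).ne rfl

theorem chainSeq_succ_eq (hreg : IsRegularDecomp K m b) (hlq : HasLinearQuotients K m)
    (hb : IsDecompositionFunction K m b) {v : Fin n →₀ ℕ} (hv : ∃ i, m i ≤ v)
    (σ : ℕ → Fin n) (i : ℕ) :
    chainSeq m b v σ (i + 1) =
      m (b (v + ∑ l ∈ Finset.range (i + 1), Finsupp.single (σ l) 1)) := by
  induction i with
  | zero => simp [chainSeq]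
  | succ i ih =>
    have hvS : ∃ j, m j ≤ v + ∑ l ∈ Finset.range (i + 1), Finsupp.single (σ l) 1 :=
      hv.imp fun _ hj => hj.trans le_self_add
    rw [chainSeq, ih, ← hreg.decomp_add_single hlq hb hvS, Finset.sum_range_succ _ (i + 1),
      add_assoc]

theorem PermOf.sum_single_eq {σ : ℕ → Fin n} {p : ℕ} {α : Finset (Fin n)}
    (hσ : PermOf σ p α) :
    ∑ l ∈ Finset.range p, Finsupp.single (σ l) (1 : ℕ) = ∑ a ∈ α, Finsupp.single a 1 :=
  Finset.sum_nbij σ (fun l hl => (hσ.2 _).2 ⟨l, Finset.mem_range.1 hl, rfl⟩)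
    (fun l hl l' hl' => hσ.1 (Finset.mem_range.1 hl) (Finset.mem_range.1 hl'))
    (fun a ha => by simpa using (hσ.2 a).1 ha) fun _ _ => rfl

theorem chainSeq_eq_of_permOf (hreg : IsRegularDecomp K m b) (hlq : HasLinearQuotients K m)
    (hb : IsDecompositionFunction K m b) {v : Fin n →₀ ℕ} (hv : ∃ i, m i ≤ v)
    {σ σ' : ℕ → Fin n} {p : ℕ} {α : Finset (Fin n)} (hσ : PermOf σ p α)
    (hσ' : PermOf σ' p α) :
    chainSeq m b v σ p = chainSeq m b v σ' p := by
  cases p with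
  | zero => rfl
  | succ p =>
    rw [chainSeq_succ_eq hreg hlq hb hv, chainSeq_succ_eq hreg hlq hb hv, hσ.sum_single_eq,
      hσ'.sum_single_eq]

end MonomialIdeal

theorem Set.eq_of_sdiff_singleton_eq {α : Type*} {V V' : Set α} {x y : α} (hxV : x ∈ V)
    (hxV' : x ∈ V') (hyV' : y ∈ V') (h : V \ {x} = V' \ {y}) : V = V' := by
  obtain rfl : y = x := by
    by_contra hyx
    have : x ∈ V' \ {y} := ⟨hxV', Ne.symm hyx⟩
    exact (h ▸ this).2 rfl
  rw [← Set.insert_sdiff_self_of_mem hxV, ← Set.insert_sdiff_self_of_mem hyV', h]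

theorem not_isFacetOf_diff_singleton {n k : ℕ} {m : Fin k → (Fin n →₀ ℕ)}
    {b : (Fin n →₀ ℕ) → Fin k} {v : Fin n →₀ ℕ} {σ σ' : ℕ → Fin n} {p : ℕ}
    {x : Fin n →₀ ℕ} (hx : x ∈ vertSet m b v σ p) (hx' : x ∈ vertSet m b v σ' p)
    (hne : vertSet m b v σ' p ≠ vertSet m b v σ p) :
    ¬ IsFacetOf m b v σ' p (vertSet m b v σ p \ {x}) := by
  rintro ⟨i, hip, hF⟩
  exact hne (Set.eq_of_sdiff_singleton_eq hx hx' ⟨i, hip, rfl⟩ hF).symm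

theorem stmt6_general (K : Type*) [Field K] {n k : ℕ} (m : Fin k → (Fin n →₀ ℕ))
    (hlq : HasLinearQuotients K m)
    (b : (Fin n →₀ ℕ) → Fin k) (hb : IsDecompositionFunction K m b)
    (hreg : IsRegularDecomp K m b)
    (j : Fin k) (α : Finset (Fin n))
    (p : ℕ)
    (σ : ℕ → Fin n) (hσ : PermOf σ p α) :
    ∀ σ' : ℕ → Fin n, PermOf σ' p α → Nondeg m b (m j) σ' p →
      vertSet m b (m j) σ' p ≠ vertSet m b (m j) σ p →
      (¬ IsFacetOf m b (m j) σ' p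
          (vertSet m b (m j) σ p \ {chainSeq m b (m j) σ 0})) ∧
      (¬ IsFacetOf m b (m j) σ' p
          (vertSet m b (m j) σ p \ {chainSeq m b (m j) σ p})) := by
  intro σ' hσ' _ hne
  have hlast : chainSeq m b (m j) σ' p = chainSeq m b (m j) σ p :=
    chainSeq_eq_of_permOf hreg hlq hb ⟨j, le_rfl⟩ hσ' hσ
  exact ⟨not_isFacetOf_diff_singleton ⟨0, p.zero_le, rfl⟩ ⟨0, p.zero_le, rfl⟩ hne,
    not_isFacetOf_diff_singleton ⟨p, le_rfl, rfl⟩ ⟨p, le_rfl, hlast.symm⟩ hne⟩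

/-- for a nondegenerate `ch(m,α,σ)`, the facet obtained by omitting the
first vertex `m_0` and the facet obtained by omitting the last vertex `m_p` are both
exterior: neither is a facet of any nondegenerate simplex `ch(m,α,σ')` different from
`ch(m,α,σ)`. -/
theorem stmt6 (K : Type*) [Field K] {n k : ℕ} (m : Fin k → (Fin n →₀ ℕ))
    (hmin : MinimalGens m) (hlq : HasLinearQuotients K m)
    (b : (Fin n →₀ ℕ) → Fin k) (hb : IsDecompositionFunction K m b)
    (hreg : IsRegularDecomp K m b)
    (j : Fin k) (α : Finset (Fin n)) (hα : ↑α ⊆ mset K m j)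
    (p : ℕ) (hcard : α.card = p)
    (σ : ℕ → Fin n) (hσ : PermOf σ p α)
    (hnd : Nondeg m b (m j) σ p) :
    ∀ σ' : ℕ → Fin n, PermOf σ' p α → Nondeg m b (m j) σ' p →
      vertSet m b (m j) σ' p ≠ vertSet m b (m j) σ p →
      (¬ IsFacetOf m b (m j) σ' p
          (vertSet m b (m j) σ p \ {chainSeq m b (m j) σ 0})) ∧
      (¬ IsFacetOf m b (m j) σ' p
          (vertSet m b (m j) σ p \ {chainSeq m b (m j) σ p})) :=
  stmt6_general K m hlq b hb hreg j α p σ hσ
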